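/- Let G be a connected graph of order n ≥ 2, let H be a connected graph with at least two vertices, and let v be a vertex of H that does not belong to any strong metric basis of H. Then n·dim_s(H) ≤ dim_s(G∘_v H); moreover, if v ∉ ∂(H) then dim_s(G∘_v H) ≤ |∂(H)|(n − 1) + dim_s(H), and if v ∈ ∂(H) then dim_s(G∘_v H) ≤ (|∂(H)| − 1)(n − 1) + dim_s(H). -/

import Mathlib

namespace RootedStrong

variable {V : Type*}

/-- `u` is maximally distant from `v`: every neighbor `w` of `u` satisfies `d(v,w) ≤ d(u,v)`. -/
def MaxDistant (G : SimpleGraph V) (u v : V) : Prop :=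
  ∀ w, G.Adj u w → G.dist v w ≤ G.dist u v

/-- `u` and `v` are mutually maximally distant. -/
def MMD (G : SimpleGraph V) (u v : V) : Prop :=
  MaxDistant G u v ∧ MaxDistant G v u

/-- The boundary `∂(G)` of a graph. -/
def boundary (G : SimpleGraph V) : Set V := {u | ∃ v, MMD G u v}

/-- A vertex is simplicial if its neighborhood induces a complete graph. -/
def Simplicial (G : SimpleGraph V) (u : V) : Prop :=
  ∀ x ∈ G.neighborSet u, ∀ y ∈ G.neighborSet u, x ≠ y → G.Adj x y

/-- The set `σ(G)` of simplicial vertices. -/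
def simplicialSet (G : SimpleGraph V) : Set V := {u | Simplicial G u}

/-- `w` strongly resolves `u` and `v`. -/
def StronglyResolves (G : SimpleGraph V) (w u v : V) : Prop :=
  G.dist w u = G.dist w v + G.dist v u ∨ G.dist w v = G.dist w u + G.dist u v

/-- A set of vertices is a strong metric generator if every pair of distinct vertices is
strongly resolved by some of its elements. -/
def IsStrongGenerator (G : SimpleGraph V) (S : Set V) : Prop :=
  ∀ u v : V, u ≠ v → ∃ w ∈ S, StronglyResolves G w u v

/-- The strong metric dimension of a graph. -/
noncomputable def sdim (G : SimpleGraph V) [Fintype V] : ℕ :=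
  sInf {n | ∃ S : Finset V, S.card = n ∧ IsStrongGenerator G (S : Set V)}

/-- A strong metric basis: a strong metric generator of minimum cardinality. -/
def IsStrongBasis (G : SimpleGraph V) [Fintype V] (S : Finset V) : Prop :=
  IsStrongGenerator G (S : Set V) ∧ S.card = sdim G

/-- The rooted product graph `G ∘_v H`. -/
def rootedProd {α β : Type*} (G : SimpleGraph α) (H : SimpleGraph β) (v : β) :
    SimpleGraph (α × β) where
  Adj p q := (p.1 = q.1 ∧ H.Adj p.2 q.2) ∨ (p.2 = v ∧ q.2 = v ∧ G.Adj p.1 q.1)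
  symm := by
    constructor
    rintro ⟨a, x⟩ ⟨b, y⟩ (⟨h1, h2⟩ | ⟨h1, h2, h3⟩)
    · exact Or.inl ⟨h1.symm, h2.symm⟩
    · exact Or.inr ⟨h2, h1, h3.symm⟩
  loopless := by
    constructor
    rintro ⟨a, x⟩ (⟨_, h2⟩ | ⟨_, _, h3⟩)
    · exact h2.ne rfl
    · exact h3.ne rfl

/-- Two distinct vertices are true twins if they have equal closed neighborhoods. -/
def TrueTwins (G : SimpleGraph V) (x y : V) : Prop :=
  x ≠ y ∧ ∀ z, (z = x ∨ G.Adj x z) ↔ (z = y ∨ G.Adj y z)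

/-- A twin-free clique: a clique containing no pair of true twins. -/
def IsTwinFreeClique (G : SimpleGraph V) (X : Set V) : Prop :=
  (∀ x ∈ X, ∀ y ∈ X, x ≠ y → G.Adj x y) ∧ ∀ x ∈ X, ∀ y ∈ X, ¬ TrueTwins G x y

/-- The twin-free clique number `ϖ(G)`. -/
noncomputable def twinFreeCliqueNum (G : SimpleGraph V) : ℕ :=
  sSup {n | ∃ X : Set V, IsTwinFreeClique G X ∧ X.ncard = n}

/-!
Distances in `G ∘_v H` are explicit: inside a copy they are those of `H`, and a shortest path
between copies `a ≠ b` runs to the root of copy `a`, along `G`, and out of the root of copy `b`.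
Hence a vertex outside copy `a` strongly resolves two vertices of copy `a` exactly when `v`
strongly resolves them in `H`.

Lower bound: if `S` is a strong metric generator of the product, the vertices of `S` in copy `a`
together with `v` strongly resolve `H`; since `v` lies in no strong metric basis, each copy carries
at least `dim_s(H)` vertices of `S`.

Upper bound: a strong metric basis of `H` in one copy and `∂(H) \ {v}` in every other copy form a
strong metric generator. The point is that every `x` lies on a geodesic from some boundary vertex
`u` to any given `y`: take `u` maximally distant from `y` with `x` on a `u`–`y` geodesic; then `u`
and any vertex maximally distant from `u` with `y` on the geodesic are mutually maximally distant.
-/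

open SimpleGraph

theorem le_dist_of_le_add_one_of_adj {G : SimpleGraph V} {g : V → ℕ} {q : V} (hq : g q = 0)
    (hg : ∀ x y, G.Adj x y → g x ≤ g y + 1) {p : V} (hpq : G.Reachable p q) :
    g p ≤ G.dist p q := by
  obtain ⟨w, hw⟩ := hpq.exists_walk_length_eq_dist
  rw [← hw]
  clear hw hpq
  induction w with
  | nil => simp [hq]
  | cons h _ ih =>
    have hstep := hg _ _ h
    have htail := ih hq
    rw [Walk.length_cons]
    omega

theorem _root_.SimpleGraph.Reachable.dist_map_le {W : Type*} {G : SimpleGraph V}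
    {G' : SimpleGraph W} (f : G →g G') {x y : V} (h : G.Reachable x y) :
    G'.dist (f x) (f y) ≤ G.dist x y := by
  obtain ⟨w, hw⟩ := h.exists_walk_length_eq_dist
  simpa [hw] using dist_le (w.map f)

section RootedProduct

variable {α β : Type*} {G : SimpleGraph α} {H : SimpleGraph β} {v : β}

@[simps]
def copyHom (G : SimpleGraph α) (H : SimpleGraph β) (v : β) (a : α) : H →g rootedProd G H v :=
  ⟨fun x => (a, x), fun h => Or.inl ⟨rfl, h⟩⟩

@[simps]
def rootHom (G : SimpleGraph α) (H : SimpleGraph β) (v : β) : G →g rootedProd G H v :=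
  ⟨fun a => (a, v), fun h => Or.inr ⟨rfl, rfl, h⟩⟩

open Classical in
noncomputable def rootedDist (G : SimpleGraph α) (H : SimpleGraph β) (v : β) (p q : α × β) :
    ℕ :=
  if p.1 = q.1 then H.dist p.2 q.2 else H.dist p.2 v + G.dist p.1 q.1 + H.dist v q.2

theorem preconnected_rootedProd (hG : G.Preconnected) (hH : H.Preconnected) :
    (rootedProd G H v).Preconnected := fun p q =>
  ((hH p.2 v).map (copyHom G H v p.1)).trans
    (((hG p.1 q.1).map (rootHom G H v)).trans ((hH v q.2).map (copyHom G H v q.1)))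

theorem connected_rootedProd (hG : G.Connected) (hH : H.Connected) :
    (rootedProd G H v).Connected :=
  have : Nonempty α := hG.nonempty
  have : Nonempty β := hH.nonempty
  ⟨preconnected_rootedProd hG.preconnected hH.preconnected⟩

theorem dist_rootedProd_le_rootedDist (hG : G.Connected) (hH : H.Connected) (p q : α × β) :
    (rootedProd G H v).dist p q ≤ rootedDist G H v p q := by
  obtain ⟨a, x⟩ := p
  obtain ⟨b, y⟩ := q
  unfold rootedDist
  split_ifs with hab
  · obtain rfl : a = b := hab
    exact (hH x y).dist_map_le (copyHom G H v a)
  · calc (rootedProd G H v).dist (a, x) (b, y)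
        ≤ (rootedProd G H v).dist (a, x) (a, v) + (rootedProd G H v).dist (a, v) (b, v) +
            (rootedProd G H v).dist (b, v) (b, y) :=
          (connected_rootedProd hG hH).dist_triangle.trans
            (Nat.add_le_add_right (connected_rootedProd hG hH).dist_triangle _)
      _ ≤ H.dist x v + G.dist a b + H.dist v y := by
          gcongr
          · exact (hH x v).dist_map_le (copyHom G H v a)
          · exact (hG a b).dist_map_le (rootHom G H v)
          · exact (hH v y).dist_map_le (copyHom G H v b)

theorem rootedDist_le_add_one_of_adj (hG : G.Connected) (hH : H.Connected) {p q : α × β}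
    (r : α × β) (h : (rootedProd G H v).Adj p q) :
    rootedDist G H v p r ≤ rootedDist G H v q r + 1 := by
  obtain ⟨a, x⟩ := p
  obtain ⟨b, y⟩ := q
  obtain ⟨c, z⟩ := r
  rcases h with ⟨rfl, hxy⟩ | ⟨rfl, rfl, hab⟩
  all_goals dsimp only at *
  · have hxy₁ := dist_eq_one_iff_adj.mpr hxy
    have hxyz := hH.dist_triangle (u := x) (v := y) (w := z)
    have hxyv := hH.dist_triangle (u := x) (v := y) (w := v)
    simp only [rootedDist]
    split_ifs <;> omega
  · have hab₁ := dist_eq_one_iff_adj.mpr hab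
    have hba₁ := dist_eq_one_iff_adj.mpr hab.symm
    have habc := hG.dist_triangle (u := a) (v := b) (w := c)
    have hne := hab.ne
    simp only [rootedDist]
    split_ifs <;> subst_vars <;> simp only [SimpleGraph.dist_self] at * <;> omega

theorem dist_rootedProd (hG : G.Connected) (hH : H.Connected) (p q : α × β) :
    (rootedProd G H v).dist p q = rootedDist G H v p q :=
  le_antisymm (dist_rootedProd_le_rootedDist hG hH p q) <|
    le_dist_of_le_add_one_of_adj (by simp [rootedDist])
      (fun _ _ h => rootedDist_le_add_one_of_adj hG hH q h)
      (preconnected_rootedProd hG.preconnected hH.preconnected p q)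

theorem dist_rootedProd_mk_mk (hG : G.Connected) (hH : H.Connected) (a : α) (x y : β) :
    (rootedProd G H v).dist (a, x) (a, y) = H.dist x y := by
  simp [dist_rootedProd hG hH, rootedDist]

theorem dist_rootedProd_of_ne (hG : G.Connected) (hH : H.Connected) {a b : α} (hab : a ≠ b)
    (x y : β) :
    (rootedProd G H v).dist (a, x) (b, y) = H.dist x v + G.dist a b + H.dist v y := by
  simp [dist_rootedProd hG hH, rootedDist, hab]

theorem stronglyResolves_comm {G : SimpleGraph V} {w x y : V} :
    StronglyResolves G w x y ↔ StronglyResolves G w y x :=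
  Or.comm

theorem stronglyResolves_rootedProd_mk_iff (hG : G.Connected) (hH : H.Connected) {a : α}
    {w x y : β} :
    StronglyResolves (rootedProd G H v) (a, w) (a, x) (a, y) ↔ StronglyResolves H w x y := by
  simp only [StronglyResolves, dist_rootedProd_mk_mk hG hH]

theorem stronglyResolves_rootedProd_of_ne_iff (hG : G.Connected) (hH : H.Connected) {a b : α}
    (hba : b ≠ a) {w x y : β} :
    StronglyResolves (rootedProd G H v) (b, w) (a, x) (a, y) ↔ StronglyResolves H v x y := by
  simp only [StronglyResolves, dist_rootedProd_of_ne hG hH hba, dist_rootedProd_mk_mk hG hH]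
  omega

theorem stronglyResolves_rootedProd_of_dist_eq_add (hG : G.Connected) (hH : H.Connected)
    {a b : α} (hab : a ≠ b) {u x : β} (hu : H.dist u v = H.dist u x + H.dist x v) (y : β) :
    StronglyResolves (rootedProd G H v) (a, u) (a, x) (b, y) := by
  right
  rw [dist_rootedProd_of_ne hG hH hab, dist_rootedProd_of_ne hG hH hab,
    dist_rootedProd_mk_mk hG hH, hu]
  ring

end RootedProduct

section Boundary

variable [Finite V] {G : SimpleGraph V}

theorem exists_maxDistant_dist_eq_add (hG : G.Connected) (x y : V) :
    ∃ u, G.dist u y = G.dist u x + G.dist x y ∧ MaxDistant G u y := by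
  obtain ⟨u, hu, hmax⟩ := Set.exists_max_image {u | G.dist u y = G.dist u x + G.dist x y}
    (G.dist · y) (Set.toFinite _) ⟨x, by simp⟩
  refine ⟨u, hu, fun w huw => ?_⟩
  by_contra! hfar
  -- a neighbour `w` of `u` farther from `y` would still have `x` on a geodesic to `y`
  have hwu := dist_eq_one_iff_adj.mpr huw.symm
  have hwy : G.dist w y ≤ G.dist w u + G.dist u y := hG.dist_triangle
  have hwxy : G.dist w y ≤ G.dist w x + G.dist x y := hG.dist_triangle
  have hwx : G.dist w x ≤ G.dist w u + G.dist u x := hG.dist_triangle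
  rw [dist_comm (u := y)] at hfar
  have hux : G.dist u y = G.dist u x + G.dist x y := hu
  have := hmax w (show G.dist w y = G.dist w x + G.dist x y by omega)
  omega

theorem exists_mem_boundary_dist_eq_add (hG : G.Connected) (x y : V) :
    ∃ u ∈ boundary G, G.dist u y = G.dist u x + G.dist x y := by
  obtain ⟨u, hu, hmax_u⟩ := exists_maxDistant_dist_eq_add hG x y
  obtain ⟨z, hz, hmax_z⟩ := exists_maxDistant_dist_eq_add hG y u
  refine ⟨u, ⟨z, fun w hw => ?_, hmax_z⟩, hu⟩
  calc G.dist z w ≤ G.dist z y + G.dist y w := hG.dist_triangle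
    _ ≤ G.dist z y + G.dist u y := Nat.add_le_add_left (hmax_u w hw) _
    _ = G.dist u z := by rw [dist_comm (u := u) (v := z), hz, dist_comm (u := y)]

theorem exists_mem_boundary_ne_dist_eq_add (hG : G.Connected) {x v : V} (hxv : x ≠ v) :
    ∃ u ∈ boundary G, u ≠ v ∧ G.dist u v = G.dist u x + G.dist x v := by
  obtain ⟨u, hu, hux⟩ := exists_mem_boundary_dist_eq_add hG x v
  refine ⟨u, hu, ?_, hux⟩
  rintro rfl
  have := hG.pos_dist_of_ne hxv
  simp only [SimpleGraph.dist_self] at hux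
  omega

end Boundary

section StrongDimension

variable {G : SimpleGraph V}

theorem isStrongGenerator_univ (G : SimpleGraph V) : IsStrongGenerator G Set.univ :=
  fun _ y _ => ⟨y, trivial, Or.inl (by simp)⟩

theorem IsStrongGenerator.nonempty [Nontrivial V] {S : Set V} (hS : IsStrongGenerator G S) :
    S.Nonempty :=
  let ⟨x, y, hxy⟩ := exists_pair_ne V
  let ⟨w, hw, _⟩ := hS x y hxy
  ⟨w, hw⟩

variable [Fintype V]

theorem exists_isStrongGenerator_card_eq_sdim (G : SimpleGraph V) :
    ∃ S : Finset V, IsStrongGenerator G S ∧ S.card = sdim G := by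
  obtain ⟨S, hcard, hS⟩ := Nat.sInf_mem (s := {n | ∃ S : Finset V, S.card = n ∧
    IsStrongGenerator G (S : Set V)})
    ⟨_, Finset.univ, rfl, by simpa using isStrongGenerator_univ G⟩
  exact ⟨S, hS, hcard⟩

theorem sdim_le_ncard {S : Set V} (hS : IsStrongGenerator G S) : sdim G ≤ S.ncard := by
  classical
  rw [Set.ncard_eq_toFinset_card']
  exact Nat.sInf_le ⟨S.toFinset, rfl, by simpa using hS⟩

theorem sdim_le_card_of_forall_isStrongBasis_notMem {v : V}
    (hv : ∀ S : Finset V, IsStrongBasis G S → v ∉ S) {T : Finset V} [DecidableEq V]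
    (hT : IsStrongGenerator G (insert v T : Finset V)) : sdim G ≤ T.card := by
  have hle : sdim G ≤ (insert v T).card := by
    simpa only [Set.ncard_coe_finset] using sdim_le_ncard hT
  by_contra! hlt
  have := Finset.card_insert_le v T
  exact hv _ ⟨hT, by omega⟩ (Finset.mem_insert_self v T)

end StrongDimension

section Bounds

variable {α β : Type*} {G : SimpleGraph α} {H : SimpleGraph β} {v : β}

theorem isStrongGenerator_insert_image_copy [DecidableEq α] [DecidableEq β] (hG : G.Connected)
    (hH : H.Connected) {S : Finset (α × β)} (hS : IsStrongGenerator (rootedProd G H v) S)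
    (a : α) :
    IsStrongGenerator H (insert v ((S.filter fun p => p.1 = a).image Prod.snd) : Finset β) := by
  intro x y hxy
  obtain ⟨⟨b, w⟩, hwS, hres⟩ := hS (a, x) (a, y) (by simp [hxy])
  by_cases hba : b = a
  · subst hba
    refine ⟨w, ?_, (stronglyResolves_rootedProd_mk_iff hG hH).mp hres⟩
    simp only [Finset.coe_insert, Set.mem_insert_iff, Finset.mem_coe, Finset.mem_image,
      Finset.mem_filter]
    exact Or.inr ⟨(b, w), ⟨hwS, rfl⟩, rfl⟩
  · exact ⟨v, by simp, (stronglyResolves_rootedProd_of_ne_iff hG hH hba).mp hres⟩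

theorem card_mul_sdim_le_sdim_rootedProd [Fintype α] [Fintype β] (hG : G.Connected)
    (hH : H.Connected) (hv : ∀ S : Finset β, IsStrongBasis H S → v ∉ S) :
    Fintype.card α * sdim H ≤ sdim (rootedProd G H v) := by
  classical
  obtain ⟨S, hS, hcard⟩ := exists_isStrongGenerator_card_eq_sdim (rootedProd G H v)
  rw [← hcard, mul_comm, ← Finset.card_univ]
  refine Finset.mul_card_image_le_card_of_maps_to (f := (Prod.fst : α × β → α)) (by simp) _
    fun a _ => ?_
  exact (sdim_le_card_of_forall_isStrongBasis_notMem hv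
    (isStrongGenerator_insert_image_copy hG hH hS a)).trans Finset.card_image_le

def rootedGenerator (H : SimpleGraph β) (v : β) (a₀ : α) (W : Set β) : Set (α × β) :=
  {a₀} ×ˢ W ∪ {a₀}ᶜ ×ˢ (boundary H \ {v})

theorem mem_rootedGenerator {a₀ a : α} {W : Set β} {u : β} :
    (a, u) ∈ rootedGenerator H v a₀ W ↔ a = a₀ ∧ u ∈ W ∨ a ≠ a₀ ∧ u ∈ boundary H ∧ u ≠ v := by
  simp [rootedGenerator]

theorem exists_mem_rootedGenerator_dist_eq_add [Finite β] [Nontrivial β] (hH : H.Connected)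
    {a₀ a : α} {W : Set β} (hW : W.Nonempty) {x : β} (hax : x = v ∨ a ≠ a₀) :
    ∃ u, (a, u) ∈ rootedGenerator H v a₀ W ∧ H.dist u v = H.dist u x + H.dist x v := by
  by_cases hxv : x = v
  · subst hxv
    by_cases ha : a = a₀
    · obtain ⟨w, hw⟩ := hW
      exact ⟨w, mem_rootedGenerator.mpr (Or.inl ⟨ha, hw⟩), by simp⟩
    · obtain ⟨y, hyx⟩ := exists_ne x
      obtain ⟨u, hu, hux, -⟩ := exists_mem_boundary_ne_dist_eq_add hH hyx
      exact ⟨u, mem_rootedGenerator.mpr (Or.inr ⟨ha, hu, hux⟩), by simp⟩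
  · obtain ⟨u, hu, huv, hux⟩ := exists_mem_boundary_ne_dist_eq_add hH hxv
    exact ⟨u, mem_rootedGenerator.mpr (Or.inr ⟨hax.resolve_left hxv, hu, huv⟩), hux⟩

theorem isStrongGenerator_rootedGenerator [Finite β] [Nontrivial β] (hG : G.Connected)
    (hH : H.Connected) (a₀ : α) {W : Set β} (hW : IsStrongGenerator H W) :
    IsStrongGenerator (rootedProd G H v) (rootedGenerator H v a₀ W) := by
  obtain ⟨w₀, hw₀⟩ := hW.nonempty
  rintro ⟨a, x⟩ ⟨b, y⟩ hne
  by_cases hab : a = b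
  · subst hab
    have hxy : x ≠ y := by rintro rfl; exact hne rfl
    by_cases ha : a = a₀
    · obtain ⟨w, hw, hres⟩ := hW x y hxy
      exact ⟨(a, w), mem_rootedGenerator.mpr (Or.inl ⟨ha, hw⟩),
        (stronglyResolves_rootedProd_mk_iff hG hH).mpr hres⟩
    obtain ⟨u, hu, hres⟩ := exists_mem_boundary_dist_eq_add hH x y
    by_cases huv : u = v
    · -- `(a, v)` is not in the generator, but every other copy sees copy `a` through that root
      subst huv
      exact ⟨(a₀, w₀), mem_rootedGenerator.mpr (Or.inl ⟨rfl, hw₀⟩),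
        (stronglyResolves_rootedProd_of_ne_iff hG hH (Ne.symm ha)).mpr (Or.inr hres)⟩
    · exact ⟨(a, u), mem_rootedGenerator.mpr (Or.inr ⟨ha, hu, huv⟩),
        (stronglyResolves_rootedProd_mk_iff hG hH).mpr (Or.inr hres)⟩
  by_cases hax : x = v ∨ a ≠ a₀
  · obtain ⟨u, hu, hux⟩ := exists_mem_rootedGenerator_dist_eq_add hH ⟨w₀, hw₀⟩ hax
    exact ⟨(a, u), hu, stronglyResolves_rootedProd_of_dist_eq_add hG hH hab hux y⟩
  · have hb : b ≠ a₀ := fun hb => hax (Or.inr (hb ▸ hab))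
    obtain ⟨u, hu, huy⟩ := exists_mem_rootedGenerator_dist_eq_add (x := y) hH ⟨w₀, hw₀⟩ (Or.inr hb)
    exact ⟨(b, u), hu, stronglyResolves_comm.mp
      (stronglyResolves_rootedProd_of_dist_eq_add hG hH (Ne.symm hab) huy x)⟩

theorem sdim_rootedProd_le [Fintype α] [Fintype β] [Nontrivial β] (hG : G.Connected)
    (hH : H.Connected) :
    sdim (rootedProd G H v) ≤ sdim H + (Fintype.card α - 1) * (boundary H \ {v}).ncard := by
  obtain ⟨W, hW, hWcard⟩ := exists_isStrongGenerator_card_eq_sdim H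
  obtain ⟨a₀⟩ := hG.nonempty
  calc sdim (rootedProd G H v)
      ≤ (rootedGenerator H v a₀ W).ncard :=
        sdim_le_ncard (isStrongGenerator_rootedGenerator hG hH a₀ hW)
    _ ≤ ({a₀} ×ˢ (W : Set β)).ncard + ({a₀}ᶜ ×ˢ (boundary H \ {v})).ncard :=
        Set.ncard_union_le _ _
    _ = sdim H + (Fintype.card α - 1) * (boundary H \ {v}).ncard := by
        rw [Set.ncard_prod, Set.ncard_prod, Set.ncard_singleton, Set.ncard_compl,
          Set.ncard_singleton, Set.ncard_coe_finset, hWcard, one_mul, Nat.card_eq_fintype_card]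

end Bounds

theorem statement17_general {α β : Type*} [Fintype α] [Fintype β]
    (G : SimpleGraph α) (H : SimpleGraph β)
    (hG : G.Connected) (hH : H.Connected)
    {n : ℕ} (hn : Fintype.card α = n) (h2b : 2 ≤ Fintype.card β)
    (v : β) (hv : ∀ S : Finset β, IsStrongBasis H S → v ∉ S) :
    n * sdim H ≤ sdim (rootedProd G H v) ∧
    (v ∉ boundary H →
      (sdim (rootedProd G H v) : ℤ) ≤
        ((boundary H).ncard : ℤ) * ((n : ℤ) - 1) + sdim H) ∧
    (v ∈ boundary H →
      (sdim (rootedProd G H v) : ℤ) ≤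
        (((boundary H).ncard : ℤ) - 1) * ((n : ℤ) - 1) + sdim H) := by
  subst hn
  have : Nontrivial β := Fintype.one_lt_card_iff_nontrivial.mp h2b
  have hα : 1 ≤ Fintype.card α := Fintype.card_pos_iff.mpr hG.nonempty
  have hle := sdim_rootedProd_le (v := v) hG hH
  refine ⟨card_mul_sdim_le_sdim_rootedProd hG hH hv, fun hvB => ?_, fun hvB => ?_⟩
  · rw [Set.sdiff_singleton_eq_self hvB] at hle
    zify [hα] at hle
    linarith
  · have hB : 1 ≤ (boundary H).ncard := (Set.ncard_pos (Set.toFinite _)).mpr ⟨v, hvB⟩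
    rw [Set.ncard_sdiff_singleton_of_mem hvB] at hle
    zify [hα, hB] at hle
    linarith

theorem statement17 {α β : Type*} [Fintype α] [Fintype β]
    (G : SimpleGraph α) (H : SimpleGraph β)
    (hG : G.Connected) (hH : H.Connected)
    {n : ℕ} (hn : Fintype.card α = n) (h2 : 2 ≤ n) (h2b : 2 ≤ Fintype.card β)
    (v : β) (hv : ∀ S : Finset β, IsStrongBasis H S → v ∉ S) :
    n * sdim H ≤ sdim (rootedProd G H v) ∧
    (v ∉ boundary H →
      (sdim (rootedProd G H v) : ℤ) ≤
        ((boundary H).ncard : ℤ) * ((n : ℤ) - 1) + sdim H) ∧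
    (v ∈ boundary H →
      (sdim (rootedProd G H v) : ℤ) ≤
        (((boundary H).ncard : ℤ) - 1) * ((n : ℤ) - 1) + sdim H) :=
  statement17_general G H hG hH hn h2b v hv

end RootedStrong
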